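/- Let v¹, v² : [0,T] × ℝ^d → ℝ^d be vector fields that are bounded and Lipschitz in space, uniformly integrably in time (i.e. t ↦ ‖vⁱ(t,·)‖_{BL} is integrable, where ‖f‖_{BL} = ‖f‖_∞ + Lip(f)). Let X¹, X², X^{1+2} denote the flows of v¹, v², and v¹+v², respectively, with X^i(s,s,x) = x. Then for all x ∈ ℝ^d, s ∈ [0,T], h > 0 with s + h ≤ T: |X^{1+2}(s, s+h, x) − X¹(s, s+h, X²(s, s+h, x))| ≤ 2 (∫ₛ^{s+h} (‖v¹(u,·)‖_{BL} + ‖v²(u,·)‖_{BL}) du)². -/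

import Mathlib

open MeasureTheory intervalIntegral Set

lemma tk_aux {d : ℕ} {T : ℝ} {f g : ℝ → EuclideanSpace ℝ (Fin d)} {B : ℝ → ℝ}
    (hd : ∀ t ∈ Set.Icc (0:ℝ) T, HasDerivAt f (g t) t)
    (hbd : ∀ t, ‖g t‖ ≤ B t)
    (hBint : MeasureTheory.IntegrableOn B (Set.Icc 0 T))
    {s t : ℝ} (hs : 0 ≤ s) (hst : s ≤ t) (ht : t ≤ T) :
    IntervalIntegrable g MeasureTheory.volume s t ∧
    f t - f s = ∫ u in s..t, g u ∧
    ‖f t - f s‖ ≤ ∫ u in s..t, B u := by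
  have hsub : Set.Icc s t ⊆ Set.Icc 0 T := Set.Icc_subset_Icc hs ht
  have hBi : IntervalIntegrable B volume s t :=
    (intervalIntegrable_iff_integrableOn_Icc_of_le hst).mpr (hBint.mono_set hsub)
  have hmeas : AEStronglyMeasurable g (volume.restrict (Set.Icc s t)) := by
    have hae : ∀ᵐ u ∂(volume.restrict (Set.Icc s t)), deriv f u = g u := by
      filter_upwards [ae_restrict_mem measurableSet_Icc] with u hu
      exact (hd u (hsub hu)).deriv
    exact ((measurable_deriv f).aestronglyMeasurable).congr hae
  have hgi : IntegrableOn g (Set.Icc s t) :=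
    Integrable.mono' (hBint.mono_set hsub) hmeas
      (Filter.Eventually.of_forall fun u => hbd u)
  have hgI : IntervalIntegrable g volume s t := (intervalIntegrable_iff_integrableOn_Icc_of_le hst).mpr hgi
  have hftc : ∫ u in s..t, g u = f t - f s := by
    apply intervalIntegral.integral_eq_sub_of_hasDerivAt
    · intro u hu
      rw [Set.uIcc_of_le hst] at hu
      exact hd u (hsub hu)
    · exact hgI
  refine ⟨hgI, hftc.symm, ?_⟩
  rw [← hftc]
  have := intervalIntegral.norm_integral_le_abs_of_norm_le (μ := volume) (a := s) (b := t)
    (f := g) (g := B) (Filter.Eventually.of_forall fun u => hbd u) hBi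
  refine this.trans (le_of_eq (abs_of_nonneg ?_))
  exact intervalIntegral.integral_nonneg hst fun u _ => (norm_nonneg (g u)).trans (hbd u)


/-- Trotter–Kato type splitting estimate for flows of vector fields.
`B1`, `B2` are the BL norms (sup norm + Lipschitz constant) in space of
the vector fields `v1`, `v2`: they bound both the sup norm and the
Lipschitz constant. -/
theorem trotter_kato_flow_estimate (d : ℕ) (T : ℝ)
    (v1 v2 : ℝ → EuclideanSpace ℝ (Fin d) → EuclideanSpace ℝ (Fin d))
    (B1 B2 : ℝ → ℝ)
    (hB1sup : ∀ u y, ‖v1 u y‖ ≤ B1 u)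
    (hB2sup : ∀ u y, ‖v2 u y‖ ≤ B2 u)
    (hB1lip : ∀ u y z, ‖v1 u y - v1 u z‖ ≤ B1 u * ‖y - z‖)
    (hB2lip : ∀ u y z, ‖v2 u y - v2 u z‖ ≤ B2 u * ‖y - z‖)
    (hB1int : MeasureTheory.IntegrableOn B1 (Set.Icc 0 T))
    (hB2int : MeasureTheory.IntegrableOn B2 (Set.Icc 0 T))
    (X1 X2 X12 : ℝ → ℝ → EuclideanSpace ℝ (Fin d) → EuclideanSpace ℝ (Fin d))
    (hX1 : ∀ s y, X1 s s y = y ∧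
      ∀ t ∈ Set.Icc (0 : ℝ) T, HasDerivAt (X1 s · y) (v1 t (X1 s t y)) t)
    (hX2 : ∀ s y, X2 s s y = y ∧
      ∀ t ∈ Set.Icc (0 : ℝ) T, HasDerivAt (X2 s · y) (v2 t (X2 s t y)) t)
    (hX12 : ∀ s y, X12 s s y = y ∧
      ∀ t ∈ Set.Icc (0 : ℝ) T, HasDerivAt (X12 s · y)
        (v1 t (X12 s t y) + v2 t (X12 s t y)) t)
    (x : EuclideanSpace ℝ (Fin d)) (s h : ℝ)
    (hs : 0 ≤ s) (hh : 0 < h) (hsh : s + h ≤ T) :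
    ‖X12 s (s + h) x - X1 s (s + h) (X2 s (s + h) x)‖ ≤
      2 * (∫ u in s..(s + h), (B1 u + B2 u)) ^ 2 := by
  have hB1nn : ∀ u, 0 ≤ B1 u := fun u => (norm_nonneg _).trans (hB1sup u x)
  have hB2nn : ∀ u, 0 ≤ B2 u := fun u => (norm_nonneg _).trans (hB2sup u x)
  have hBnn : ∀ u, 0 ≤ B1 u + B2 u := fun u => add_nonneg (hB1nn u) (hB2nn u)
  have hsh' : s ≤ s + h := by linarith
  set p : EuclideanSpace ℝ (Fin d) := X2 s (s + h) x with hp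
  set A : ℝ := ∫ u in s..(s + h), (B1 u + B2 u) with hA
  have hBsum_int : MeasureTheory.IntegrableOn (fun u => B1 u + B2 u) (Set.Icc 0 T) :=
    hB1int.add hB2int
  -- the three g functions and their bounds
  set gy : ℝ → EuclideanSpace ℝ (Fin d) :=
    fun u => v1 u (X12 s u x) + v2 u (X12 s u x) with hgy
  set gz : ℝ → EuclideanSpace ℝ (Fin d) := fun u => v2 u (X2 s u x) with hgz
  set gw : ℝ → EuclideanSpace ℝ (Fin d) := fun u => v1 u (X1 s u p) with hgw
  have hgy_bd : ∀ u, ‖gy u‖ ≤ B1 u + B2 u := fun u =>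
    (norm_add_le _ _).trans (add_le_add (hB1sup u _) (hB2sup u _))
  have hgz_bd : ∀ u, ‖gz u‖ ≤ B2 u := fun u => hB2sup u _
  have hgw_bd : ∀ u, ‖gw u‖ ≤ B1 u := fun u => hB1sup u _
  -- FTC facts for any t ∈ [s, s+h]
  have hy : ∀ t, s ≤ t → t ≤ s + h →
      IntervalIntegrable gy MeasureTheory.volume s t ∧
      X12 s t x - x = ∫ u in s..t, gy u ∧ ‖X12 s t x - x‖ ≤ ∫ u in s..t, (B1 u + B2 u) := by
    intro t h1 h2
    have := tk_aux (hX12 s x).2 hgy_bd hBsum_int hs h1 (h2.trans hsh)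
    rwa [(hX12 s x).1] at this
  have hz : ∀ t, s ≤ t → t ≤ s + h →
      IntervalIntegrable gz MeasureTheory.volume s t ∧
      X2 s t x - x = ∫ u in s..t, gz u ∧ ‖X2 s t x - x‖ ≤ ∫ u in s..t, B2 u := by
    intro t h1 h2
    have := tk_aux (hX2 s x).2 hgz_bd hB2int hs h1 (h2.trans hsh)
    rwa [(hX2 s x).1] at this
  have hw : ∀ t, s ≤ t → t ≤ s + h →
      IntervalIntegrable gw MeasureTheory.volume s t ∧
      X1 s t p - p = ∫ u in s..t, gw u ∧ ‖X1 s t p - p‖ ≤ ∫ u in s..t, B1 u := by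
    intro t h1 h2
    have := tk_aux (hX1 s p).2 hgw_bd hB1int hs h1 (h2.trans hsh)
    rwa [(hX1 s p).1] at this
  -- interval integrability of B's on [s,s+h]
  have hsub : Set.Icc s (s + h) ⊆ Set.Icc 0 T := Set.Icc_subset_Icc hs hsh
  have hB1i : IntervalIntegrable B1 MeasureTheory.volume s (s + h) :=
    (intervalIntegrable_iff_integrableOn_Icc_of_le hsh').mpr (hB1int.mono_set hsub)
  have hB2i : IntervalIntegrable B2 MeasureTheory.volume s (s + h) :=
    (intervalIntegrable_iff_integrableOn_Icc_of_le hsh').mpr (hB2int.mono_set hsub)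
  have hBi : IntervalIntegrable (fun u => B1 u + B2 u) MeasureTheory.volume s (s + h) :=
    hB1i.add hB2i
  -- monotonicity of partial integrals
  have hmono : ∀ (B : ℝ → ℝ), (∀ u, 0 ≤ B u) →
      IntervalIntegrable B MeasureTheory.volume s (s + h) →
      ∀ t, s ≤ t → t ≤ s + h → (∫ u in s..t, B u) ≤ ∫ u in s..(s + h), B u := by
    intro B hBn hBI t h1 h2
    exact intervalIntegral.integral_mono_interval le_rfl h1 h2
      (Filter.Eventually.of_forall fun u => hBn u) hBI
  have hint1A : (∫ u in s..(s + h), B1 u) + (∫ u in s..(s + h), B2 u) = A := by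
    rw [hA, intervalIntegral.integral_add hB1i hB2i]
  have hB1nnI : 0 ≤ ∫ u in s..(s + h), B1 u :=
    intervalIntegral.integral_nonneg hsh' fun u _ => hB1nn u
  have hB2nnI : 0 ≤ ∫ u in s..(s + h), B2 u :=
    intervalIntegral.integral_nonneg hsh' fun u _ => hB2nn u
  have hB1leA : (∫ u in s..(s + h), B1 u) ≤ A := by linarith
  have hB2leA : (∫ u in s..(s + h), B2 u) ≤ A := by linarith
  have hAnn : 0 ≤ A := intervalIntegral.integral_nonneg hsh' (fun u _ => hBnn u)
  -- distance bounds on [s, s+h]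
  have hyx : ∀ t, s ≤ t → t ≤ s + h → ‖X12 s t x - x‖ ≤ A := by
    intro t h1 h2
    exact ((hy t h1 h2).2.2).trans (hmono _ hBnn hBi t h1 h2)
  have hzx : ∀ t, s ≤ t → t ≤ s + h → ‖X2 s t x - x‖ ≤ A := by
    intro t h1 h2
    exact ((hz t h1 h2).2.2).trans (((hmono _ hB2nn hB2i t h1 h2)).trans hB2leA)
  have hpx : ‖p - x‖ ≤ ∫ u in s..(s + h), B2 u := (hz (s + h) hsh' le_rfl).2.2
  have hwx : ∀ t, s ≤ t → t ≤ s + h → ‖X1 s t p - x‖ ≤ A := by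
    intro t h1 h2
    calc ‖X1 s t p - x‖ ≤ ‖X1 s t p - p‖ + ‖p - x‖ := norm_sub_le_norm_sub_add_norm_sub _ _ _
      _ ≤ (∫ u in s..t, B1 u) + ∫ u in s..(s + h), B2 u :=
        add_le_add (hw t h1 h2).2.2 hpx
      _ ≤ (∫ u in s..(s + h), B1 u) + ∫ u in s..(s + h), B2 u :=
        add_le_add_left (hmono _ hB1nn hB1i t h1 h2) _
      _ = A := hint1A
  -- key identity at time s+h
  have hgyI := (hy (s + h) hsh' le_rfl).1
  have hgzI := (hz (s + h) hsh' le_rfl).1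
  have hgwI := (hw (s + h) hsh' le_rfl).1
  have hkey : X12 s (s + h) x - X1 s (s + h) p
      = ∫ u in s..(s + h), (gy u - gw u - gz u) := by
    rw [intervalIntegral.integral_sub (hgyI.sub hgwI) hgzI,
      intervalIntegral.integral_sub hgyI hgwI,
      ← (hy (s + h) hsh' le_rfl).2.1, ← (hw (s + h) hsh' le_rfl).2.1,
      ← (hz (s + h) hsh' le_rfl).2.1]
    abel
  -- pointwise bound on the integrand
  have hptwise : ∀ u, u ∈ Set.Icc s (s + h) →
      ‖gy u - gw u - gz u‖ ≤ (B1 u + B2 u) * (2 * A) := by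
    intro u hu
    have h1 := hu.1
    have h2 := hu.2
    have e1 : gy u - gw u - gz u
        = (v1 u (X12 s u x) - v1 u (X1 s u p)) + (v2 u (X12 s u x) - v2 u (X2 s u x)) := by
      simp only [hgy, hgz, hgw]; abel
    have hyw : ‖X12 s u x - X1 s u p‖ ≤ 2 * A := by
      have t1 := norm_sub_le_norm_sub_add_norm_sub (X12 s u x) x (X1 s u p)
      rw [norm_sub_rev x] at t1
      have t2 := hyx u h1 h2
      have t3 := hwx u h1 h2
      linarith
    have hyz : ‖X12 s u x - X2 s u x‖ ≤ 2 * A := by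
      have t1 := norm_sub_le_norm_sub_add_norm_sub (X12 s u x) x (X2 s u x)
      rw [norm_sub_rev x] at t1
      have t2 := hyx u h1 h2
      have t3 := hzx u h1 h2
      linarith
    rw [e1]
    have n1 := norm_add_le (v1 u (X12 s u x) - v1 u (X1 s u p))
      (v2 u (X12 s u x) - v2 u (X2 s u x))
    have l1 := hB1lip u (X12 s u x) (X1 s u p)
    have l2 := hB2lip u (X12 s u x) (X2 s u x)
    have m1 := mul_le_mul_of_nonneg_left hyw (hB1nn u)
    have m2 := mul_le_mul_of_nonneg_left hyz (hB2nn u)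
    have e2 : (B1 u + B2 u) * (2 * A) = B1 u * (2 * A) + B2 u * (2 * A) := by ring
    linarith
  -- conclude
  rw [hkey]
  have hbd2 : IntervalIntegrable (fun u => (B1 u + B2 u) * (2 * A))
      MeasureTheory.volume s (s + h) := hBi.mul_const _
  have hae : ∀ᵐ u ∂(MeasureTheory.volume.restrict (Set.uIoc s (s + h))),
      ‖gy u - gw u - gz u‖ ≤ (B1 u + B2 u) * (2 * A) := by
    rw [Set.uIoc_of_le hsh']
    filter_upwards [MeasureTheory.ae_restrict_mem measurableSet_Ioc] with u hu
    exact hptwise u ⟨hu.1.le, hu.2⟩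
  have hstep := intervalIntegral.norm_integral_le_abs_of_norm_le hae hbd2
  have hval : (∫ u in s..(s + h), (B1 u + B2 u) * (2 * A)) = 2 * A ^ 2 := by
    rw [intervalIntegral.integral_mul_const, ← hA]; ring
  rw [hval] at hstep
  calc ‖∫ u in s..(s + h), (gy u - gw u - gz u)‖ ≤ |2 * A ^ 2| := hstep
    _ = 2 * A ^ 2 := abs_of_nonneg (by positivity)
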